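/- arXiv:1201.3299 — 2 statements merged into one kernel-verified Lean document; each statement's English description precedes it below -/
import Mathlib

section
/- For the all-but subtraction game with excluded set X = {1, 3, 4}, the Grundy sequence is purely arithmetic periodic with period 12 and saltus 4: G(n + 12) = G(n) + 4 for all n ∈ ℕ. -/
/-- The minimum excludant of a set of naturals. -/
noncomputable def mex (S : Set ℕ) : ℕ := sInf {m | m ∉ S}

/-- `G` is the Grundy (nim) sequence of the all-but subtraction game with
excluded set `X`: `G n = mex { G (n - t) : t > 0, t ∉ X, t ≤ n }`. -/
def IsGrundy (X : Set ℕ) (G : ℕ → ℕ) : Prop :=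
  ∀ n, G n = mex {m | ∃ t, 0 < t ∧ t ∉ X ∧ t ≤ n ∧ G (n - t) = m}

def pat : ℕ → ℕ
  | 0 => 0 | 1 => 0 | 2 => 1 | 3 => 1 | 4 => 0 | 5 => 2
  | 6 => 1 | 7 => 3 | 8 => 2 | 9 => 2 | 10 => 3 | 11 => 3
  | _ => 0

def fcl (n : ℕ) : ℕ := 4 * (n / 12) + pat (n % 12)

lemma mex_eq_of (S : Set ℕ) (k : ℕ) (h1 : k ∉ S) (h2 : ∀ m < k, m ∈ S) :
    mex S = k := by
  have hk : k ∈ {m | m ∉ S} := h1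
  apply le_antisymm (Nat.sInf_le hk)
  by_contra h
  push_neg at h
  exact (Nat.sInf_mem ⟨k, hk⟩) (h2 _ h)

lemma patA : ∀ r < 12, ∀ s < 12, r ≤ s ∧ pat r = pat s →
    s - r = 0 ∨ s - r = 1 ∨ s - r = 3 ∨ s - r = 4 := by decide

lemma patBound : ∀ r < 12, pat r ≤ 3 := by decide

lemma patB0 : ∀ s < 12, ∀ bm < pat s,
    ∃ o < 12, pat o = bm ∧ o + 2 ≤ s ∧ s - o ≠ 3 ∧ s - o ≠ 4 := by decide

lemma patB1 : ∀ s < 12, ∀ bm < 4,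
    ∃ o < 12, pat o = bm ∧ 2 ≤ 12 + s - o ∧ 12 + s - o ≠ 3 ∧ 12 + s - o ≠ 4 := by decide

lemma patB2 : ∀ bm < 4, ∃ o ≤ 7, pat o = bm := by decide

lemma fclA (j n : ℕ) (hjn : j ≤ n) (h : fcl j = fcl n) :
    n - j = 0 ∨ n - j = 1 ∨ n - j = 3 ∨ n - j = 4 := by
  have hpr : pat (j % 12) ≤ 3 := patBound _ (Nat.mod_lt _ (by norm_num))
  have hps : pat (n % 12) ≤ 3 := patBound _ (Nat.mod_lt _ (by norm_num))
  simp only [fcl] at h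
  have h1 : j / 12 = n / 12 := by omega
  have h2 : pat (j % 12) = pat (n % 12) := by omega
  have h3 : j % 12 ≤ n % 12 := by omega
  have := patA _ (Nat.mod_lt _ (by norm_num)) _ (Nat.mod_lt _ (by norm_num)) ⟨h3, h2⟩
  omega

lemma key (G : ℕ → ℕ) (hG : IsGrundy {1, 3, 4} G) : ∀ n, G n = fcl n := by
  intro n
  induction n using Nat.strong_induction_on with
  | _ n ih =>
  rw [hG n]
  apply mex_eq_of
  · rintro ⟨t, ht0, htX, htn, hft⟩
    rw [ih (n - t) (by omega)] at hft
    have := fclA (n - t) n (by omega) hft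
    simp only [Set.mem_insert_iff, Set.mem_singleton_iff, not_or] at htX
    omega
  · intro m hm
    have hps : pat (n % 12) ≤ 3 := patBound _ (Nat.mod_lt _ (by norm_num))
    simp only [fcl] at hm
    have hab : m / 4 ≤ n / 12 := by omega
    rcases Nat.lt_or_ge (m / 4 + 1) (n / 12) with hcase | hcase
    · -- a + 2 ≤ b
      obtain ⟨o, ho7, hpo⟩ := patB2 (m % 4) (Nat.mod_lt _ (by norm_num))
      refine ⟨n - (12 * (m / 4) + o), by omega, ?_, by omega, ?_⟩
      · simp only [Set.mem_insert_iff, Set.mem_singleton_iff, not_or]; omega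
      · have hle : 12 * (m / 4) + o ≤ n := by omega
        have hsub : n - (n - (12 * (m / 4) + o)) = 12 * (m / 4) + o := by omega
        rw [hsub, ih _ (by omega)]
        simp only [fcl]
        have h1 : (12 * (m / 4) + o) / 12 = m / 4 := by omega
        have h2 : (12 * (m / 4) + o) % 12 = o := by omega
        rw [h1, h2, hpo]; omega
    rcases Nat.lt_or_ge (m / 4) (n / 12) with hcase2 | hcase2
    · -- a + 1 = b
      have hb : m / 4 + 1 = n / 12 := by omega
      obtain ⟨o, ho, hpo, ht2, ht3, ht4⟩ :=
        patB1 (n % 12) (Nat.mod_lt _ (by norm_num)) (m % 4) (Nat.mod_lt _ (by norm_num))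
      refine ⟨12 + n % 12 - o, by omega, ?_, by omega, ?_⟩
      · simp only [Set.mem_insert_iff, Set.mem_singleton_iff, not_or]; omega
      · have hsub : n - (12 + n % 12 - o) = 12 * (m / 4) + o := by omega
        rw [hsub, ih _ (by omega)]
        simp only [fcl]
        have h1 : (12 * (m / 4) + o) / 12 = m / 4 := by omega
        have h2 : (12 * (m / 4) + o) % 12 = o := by omega
        rw [h1, h2, hpo]; omega
    · -- a = b
      have hb : m / 4 = n / 12 := by omega
      have hbm : m % 4 < pat (n % 12) := by omega
      obtain ⟨o, ho, hpo, ht2, ht3, ht4⟩ :=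
        patB0 (n % 12) (Nat.mod_lt _ (by norm_num)) (m % 4) hbm
      refine ⟨n % 12 - o, by omega, ?_, by omega, ?_⟩
      · simp only [Set.mem_insert_iff, Set.mem_singleton_iff, not_or]; omega
      · have hsub : n - (n % 12 - o) = 12 * (n / 12) + o := by omega
        rw [hsub, ih _ (by omega)]
        simp only [fcl]
        have h1 : (12 * (n / 12) + o) / 12 = n / 12 := by omega
        have h2 : (12 * (n / 12) + o) % 12 = o := by omega
        rw [h1, h2, hpo]; omega

theorem stmt_14 (G : ℕ → ℕ) (hG : IsGrundy {1, 3, 4} G) :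
    ∀ n, G (n + 12) = G n + 4 := by
  intro n
  rw [key G hG, key G hG]
  simp only [fcl]
  have h1 : (n + 12) % 12 = n % 12 := by omega
  rw [h1]; omega
end

section
/- Let a < b be positive integers with b ≠ 2a, X = {a, b, a+b}, and G the associated Grundy sequence. Suppose n is the least pile with G(n) = k and that G(n+a) ≠ k (i.e., G(n+a) < k). Then G(n+b) = k. -/
/-!
Let `X = {a, b, a + b}`. Two positions with equal Grundy value cannot differ by a move, so they
differ by an element of `X`. The options of `n + b` contain those of `n` (shift every move by `b`),
so all values below `k` occur. If `k` were an option of `n + b`, reached at `m`, then `m ≥ n` by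
minimality of `n`; `m = n` would need the excluded move `b`, and `n < m < n + b` forces
`m - n = a`, contradicting `G (n + a) ≠ k`.
-/

def options (X : Set ℕ) (G : ℕ → ℕ) (n : ℕ) : Set ℕ :=
  {m | ∃ t, 0 < t ∧ t ∉ X ∧ t ≤ n ∧ G (n - t) = m}

lemma mex_eq_of_forall_lt_mem {S : Set ℕ} {k : ℕ} (hlt : ∀ j < k, j ∈ S) (hk : k ∉ S) :
    mex S = k := by
  refine le_antisymm (Nat.sInf_le hk) (not_lt.mp fun h => ?_)
  exact Nat.sInf_mem (s := {m | m ∉ S}) ⟨k, hk⟩ (hlt _ h)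

lemma mex_notMem {S : Set ℕ} (hS : S.Finite) : mex S ∉ S :=
  Nat.sInf_mem hS.infinite_compl.nonempty

lemma mem_of_lt_mex {S : Set ℕ} {j : ℕ} (h : j < mex S) : j ∈ S := by
  by_contra hj
  exact not_le.mpr h (Nat.sInf_le hj)

lemma options_finite (X : Set ℕ) (G : ℕ → ℕ) (n : ℕ) : (options X G n).Finite := by
  refine ((Set.finite_Iio n).image G).subset ?_
  rintro m ⟨t, ht0, -, htn, rfl⟩
  exact ⟨n - t, by simp only [Set.mem_Iio]; omega, rfl⟩

lemma options_subset_options_add {X : Set ℕ} {s : ℕ} (hs : ∀ t, 0 < t → t ∉ X → t + s ∉ X)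
    (G : ℕ → ℕ) (n : ℕ) : options X G n ⊆ options X G (n + s) := by
  rintro m ⟨t, ht0, htX, htn, rfl⟩
  exact ⟨t + s, by omega, hs t ht0 htX, by omega, by rw [Nat.add_sub_add_right]⟩

namespace IsGrundy

variable {X : Set ℕ} {G : ℕ → ℕ}

lemma eq_mex (hG : IsGrundy X G) (n : ℕ) : G n = mex (options X G n) := hG n

lemma mem_options_of_lt (hG : IsGrundy X G) {n j : ℕ} (hj : j < G n) : j ∈ options X G n :=
  mem_of_lt_mex (hG.eq_mex n ▸ hj)

lemma notMem_options (hG : IsGrundy X G) (n : ℕ) : G n ∉ options X G n :=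
  hG.eq_mex n ▸ mex_notMem (options_finite X G n)

lemma eq_of_forall_lt_mem_options (hG : IsGrundy X G) {n k : ℕ}
    (hlt : ∀ j < k, j ∈ options X G n) (hk : k ∉ options X G n) : G n = k :=
  (hG.eq_mex n).trans (mex_eq_of_forall_lt_mem hlt hk)

lemma sub_mem_of_eq (hG : IsGrundy X G) {n m : ℕ} (hnm : n < m) (hGnm : G n = G m) :
    m - n ∈ X := by
  by_contra hX
  refine hG.notMem_options m ⟨m - n, by omega, hX, by omega, ?_⟩
  rwa [Nat.sub_sub_self hnm.le]

/-- Every value is taken: far beyond `X`, every earlier position is an option. -/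
lemma surjective (hG : IsGrundy X G) (hX : BddAbove X) : Function.Surjective G := by
  obtain ⟨N, hN⟩ := hX
  intro k
  induction k using Nat.strong_induction_on with
  | _ k ih =>
    choose! f hf using ih
    by_contra hk
    simp only [not_exists] at hk
    set n := (Finset.range k).sup f + N + 1
    refine hk n (hG.eq_of_forall_lt_mem_options (fun j hj => ?_) ?_)
    · have hfj : f j ≤ (Finset.range k).sup f := Finset.le_sup (Finset.mem_range.mpr hj)
      refine ⟨n - f j, by omega, fun hmem => ?_, by omega, ?_⟩
      · have := hN hmem
        omega
      · rw [Nat.sub_sub_self (by omega), hf j hj]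
    · rintro ⟨t, -, -, -, hGt⟩
      exact hk _ hGt

end IsGrundy

theorem stmt_16_general (a b : ℕ) (hab : a < b)
    (G : ℕ → ℕ) (hG : IsGrundy {a, b, a + b} G) (k n : ℕ)
    (hn : n = sInf {i | G i = k}) (hk : G (n + a) ≠ k) :
    G (n + b) = k := by
  have hGn : G n = k := hn ▸ Nat.sInf_mem (hG.surjective (Set.toFinite _).bddAbove k)
  have hmin : ∀ m < n, G m ≠ k := fun m hm => Nat.notMem_of_lt_sInf (s := {i | G i = k}) (hn ▸ hm)
  have hshift : ∀ t, 0 < t → t ∉ ({a, b, a + b} : Set ℕ) → t + b ∉ ({a, b, a + b} : Set ℕ) := by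
    simp only [Set.mem_insert_iff, Set.mem_singleton_iff]
    omega
  refine hG.eq_of_forall_lt_mem_options
    (fun j hj => options_subset_options_add hshift G n (hG.mem_options_of_lt (hGn ▸ hj))) ?_
  rintro ⟨t, ht0, htX, htb, hGt⟩
  have hnm : n ≤ n + b - t := not_lt.mp fun h => hmin _ h hGt
  rcases hnm.eq_or_lt with heq | hlt
  · exact htX (by simp only [Set.mem_insert_iff, Set.mem_singleton_iff]; omega)
  · have hgap := hG.sub_mem_of_eq hlt (hGn.trans hGt.symm)
    simp only [Set.mem_insert_iff, Set.mem_singleton_iff] at hgap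
    exact hk (by rwa [show n + a = n + b - t by omega])

theorem stmt_16 (a b : ℕ) (ha : 0 < a) (hab : a < b) (hb : b ≠ 2 * a)
    (G : ℕ → ℕ) (hG : IsGrundy {a, b, a + b} G) (k n : ℕ)
    (hn : n = sInf {i | G i = k}) (hk : G (n + a) ≠ k) :
    G (n + b) = k :=
  stmt_16_general a b hab G hG k n hn hk
end
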